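/- For every pushdown system P = (Q, Γ, A, Δ) in push-pop normal form, setting ι(n, k) = n · k · ((n + k)^n + 1): for all e ∈ ℕ with e ≥ 1, all linked pairs (α, β), and all configurations qαβ^eγ of P such that qαβ^{e−d}γ ≁ qαβ^ω for all d ∈ [1, e], there is a β^ω-avoiding digging sequence (r₀, r₁, …, r_e) for (q, α, β) such that for every k ∈ ℕ and every interval [a, b] ⊆ [0, e] with b − a + 1 > ι(|P|, k), there are more than k pairwise non-bisimilar configurations in the set {r_d β^{e−d} γ | d ∈ [a, b]}. -/

import Mathlib

/-- Stack contents: finite (a list in `Γ*`) or infinite (a stream, used for `αβ^ω`). -/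
def SC (Γ : Type) : Type := List Γ ⊕ Stream' Γ

namespace SC

/-- Put one symbol on top of a stack content. -/
def cons {Γ : Type} (X : Γ) : SC Γ → SC Γ
  | Sum.inl l => Sum.inl (X :: l)
  | Sum.inr s => Sum.inr (Stream'.cons X s)

/-- Put a finite word on top of a stack content. -/
def push {Γ : Type} (γ : List Γ) : SC Γ → SC Γ
  | Sum.inl l => Sum.inl (γ ++ l)
  | Sum.inr s => Sum.inr (Stream'.appendStream' γ s)

end SC

/-- `listPow β i = β^i`, the `i`-fold concatenation of `β`. -/
def listPow {Γ : Type} (β : List Γ) : ℕ → List Γ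
  | 0 => []
  | n + 1 => β ++ listPow β n

/-- The infinite stack content `β^ω` (for nonempty `β`). -/
def cycSC {Γ : Type} (β : List Γ) (h : β ≠ []) : SC Γ := Sum.inr (Stream'.cycle β h)

/-- A pushdown system, given by its (finite) transition relation
`Δ ⊆ Q × Γ × A × Q × Γ*`. -/
structure PDS (Q Γ A : Type) where
  Δ : Finset (Q × Γ × A × Q × List Γ)

namespace PDS

variable {Q Γ A : Type}

/-- The size `|P| = |Q| + |Γ| + |A| + |Δ|` of a pushdown system. -/
def size (P : PDS Q Γ A) [Fintype Q] [Fintype Γ] [Fintype A] : ℕ :=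
  Fintype.card Q + Fintype.card Γ + Fintype.card A + P.Δ.card

/-- Push-pop normal form: every transition pushes a word of length at most 2. -/
def PushPop (P : PDS Q Γ A) : Prop := ∀ δ ∈ P.Δ, δ.2.2.2.2.length ≤ 2

/-- The `a`-labeled step relation on configurations: `pXσ →_a qγσ`. -/
def Step (P : PDS Q Γ A) (a : A) (s t : Q × SC Γ) : Prop :=
  ∃ p X q γ σ, (p, X, a, q, γ) ∈ P.Δ ∧ s = (p, SC.cons X σ) ∧ t = (q, SC.push γ σ)

/-- A step with some label. -/
def StepAny (P : PDS Q Γ A) (s t : Q × SC Γ) : Prop := ∃ a, P.Step a s t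

/-- Reachability `→*`. -/
def Reach (P : PDS Q Γ A) : (Q × SC Γ) → (Q × SC Γ) → Prop :=
  Relation.ReflTransGen P.StepAny

/-- `StepN P n s t` : there is a path of length exactly `n` from `s` to `t`. -/
def StepN (P : PDS Q Γ A) : ℕ → (Q × SC Γ) → (Q × SC Γ) → Prop
  | 0, s, t => s = t
  | n + 1, s, t => ∃ u, P.StepAny s u ∧ StepN P n u t

/-- `R` is a bisimulation. -/
def IsBisim (P : PDS Q Γ A) (R : (Q × SC Γ) → (Q × SC Γ) → Prop) : Prop :=
  ∀ s t, R s t → ∀ a,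
    (∀ s', P.Step a s s' → ∃ t', P.Step a t t' ∧ R s' t') ∧
    (∀ t', P.Step a t t' → ∃ s', P.Step a s s' ∧ R s' t')

/-- Bisimilarity `s ∼ t`. -/
def Bisim (P : PDS Q Γ A) (s t : Q × SC Γ) : Prop := ∃ R, P.IsBisim R ∧ R s t

/-- `eats_α(T) = { r | ∃ q ∈ T, qα →* r }`. -/
def eats (P : PDS Q Γ A) (α : List Γ) (T : Set Q) : Set Q :=
  {r | ∃ q ∈ T, P.Reach (q, Sum.inl α) (r, Sum.inl ([] : List Γ))}

/-- `(α, β)` (with `β` nonempty) is a linked pair if `eats_α = eats_{αβ}`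
and `eats_β = eats_{ββ}`. -/
def LinkedPair (P : PDS Q Γ A) (α β : List Γ) : Prop :=
  β ≠ [] ∧ P.eats α = P.eats (α ++ β) ∧ P.eats β = P.eats (β ++ β)

/-- Applying one concrete transition `δ = (p, X, a, q, γ)`. -/
def TStep (P : PDS Q Γ A) (δ : Q × Γ × A × Q × List Γ) (s t : Q × SC Γ) : Prop :=
  δ ∈ P.Δ ∧ ∃ σ, s = (δ.1, SC.cons δ.2.1 σ) ∧ t = (δ.2.2.2.1, SC.push δ.2.2.2.2 σ)

/-- `RunTo P ρ s t` : applying the sequence of transitions `ρ` starting from `s`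
yields `t`. -/
def RunTo (P : PDS Q Γ A) : List (Q × Γ × A × Q × List Γ) → (Q × SC Γ) → (Q × SC Γ) → Prop
  | [], s, t => s = t
  | δ :: ρ, s, t => ∃ u, P.TStep δ s u ∧ RunTo P ρ u t

/-- Bisimulation classes of configurations reachable from `s₀`
(the states of the bisimulation quotient of `L(P, s₀)`). -/
def classes (P : PDS Q Γ A) (s₀ : Q × SC Γ) : Set (Set (Q × SC Γ)) :=
  {c | ∃ s, P.Reach s₀ s ∧ c = {t | P.Reach s₀ t ∧ P.Bisim s t}}

/-- The `a`-labeled step relation on bisimulation classes. -/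
def classStep (P : PDS Q Γ A) (a : A) (c d : Set (Q × SC Γ)) : Prop :=
  ∃ s ∈ c, ∃ t ∈ d, P.Step a s t

end PDS

/-- `StackGrowth` of a single transition: `|γ| − 1`. -/
def tGrowth {Q Γ A : Type} (δ : Q × Γ × A × Q × List Γ) : ℤ := (δ.2.2.2.2.length : ℤ) - 1

/-- `StackGrowth` of a run. -/
def runGrowth {Q Γ A : Type} (ρ : List (Q × Γ × A × Q × List Γ)) : ℤ := (ρ.map tGrowth).sum

/-- A run is augmenting if every prefix has nonnegative stack growth. -/
def Augmenting {Q Γ A : Type} (ρ : List (Q × Γ × A × Q × List Γ)) : Prop :=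
  ∀ i ≤ ρ.length, 0 ≤ runGrowth (ρ.take i)

/-- A digging sequence `(r 0, …, r h)` for `(q, α, β)`. -/
def DiggingSeq {Q Γ A : Type} (P : PDS Q Γ A) (q : Q) (α β : List Γ)
    (h : ℕ) (r : ℕ → Q) : Prop :=
  r 0 ∈ P.eats α {q} ∧ ∀ d, 1 ≤ d → d ≤ h → r d ∈ P.eats β {r (d - 1)}

/-- A `β^ω`-avoiding digging sequence `(r 0, …, r h)` for `(q, α, β)`,
with respect to the configuration `qαβ^eγ` (where `e ≥ 1`). -/
def Avoiding {Q Γ A : Type} (P : PDS Q Γ A) (q : Q) (α β γ : List Γ) (hβ : β ≠ [])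
    (e h : ℕ) (r : ℕ → Q) : Prop :=
  DiggingSeq P q α β h r ∧
  (∃ r' ∈ P.eats β {r 0},
      ¬ P.Bisim (r', Sum.inl (listPow β (e - 1) ++ γ)) (r', cycSC β hβ)) ∧
  ∀ d, 1 ≤ d → d ≤ h →
    ¬ P.Bisim (r d, Sum.inl (listPow β (e - d) ++ γ)) (r d, cycSC β hβ)

/-- The class of elementary functions `ℕ^k → ℕ`: the smallest class containing
constants, projections, addition, multiplication and exponentiation, and closed
under composition. -/
inductive ElementaryFun : {k : ℕ} → ((Fin k → ℕ) → ℕ) → Prop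
  | const {k : ℕ} (c : ℕ) : ElementaryFun (fun _ : Fin k → ℕ => c)
  | proj {k : ℕ} (i : Fin k) : ElementaryFun (fun v : Fin k → ℕ => v i)
  | add : ElementaryFun (fun v : Fin 2 → ℕ => v 0 + v 1)
  | mul : ElementaryFun (fun v : Fin 2 → ℕ => v 0 * v 1)
  | exp : ElementaryFun (fun v : Fin 2 → ℕ => v 0 ^ v 1)
  | comp {k m : ℕ} (f : (Fin m → ℕ) → ℕ) (g : Fin m → (Fin k → ℕ) → ℕ) :
      ElementaryFun f → (∀ i, ElementaryFun (g i)) →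
      ElementaryFun (fun v : Fin k → ℕ => f (fun i => g i v))

/-- A binary function `ℕ² → ℕ` is elementary. -/
def Elementary2 (φ : ℕ → ℕ → ℕ) : Prop :=
  ElementaryFun (fun v : Fin 2 → ℕ => φ (v 0) (v 1))

/-- A ternary function `ℕ³ → ℕ` is elementary. -/
def Elementary3 (φ : ℕ → ℕ → ℕ → ℕ) : Prop :=
  ElementaryFun (fun v : Fin 3 → ℕ => φ (v 0) (v 1) (v 2))

/-- `prodSeg w i len = w (i+1) * w (i+2) * ⋯ * w (i+len+1)` in a semigroup. -/
def prodSeg {S : Type} [Semigroup S] (w : ℕ → S) (i : ℕ) : ℕ → S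
  | 0 => w (i + 1)
  | len + 1 => prodSeg w i len * w (i + len + 2)

/-- `catSeg α i len = α (i+1) ++ α (i+2) ++ ⋯ ++ α (i+len+1)`. -/
def catSeg {Γ : Type} (α : ℕ → List Γ) (i : ℕ) : ℕ → List Γ
  | 0 => α (i + 1)
  | len + 1 => catSeg α i len ++ α (i + len + 2)

/-!
Each `r_d` (`d ≥ 1`) is chosen so that `r_d β^{e-d}γ` is bisimilar neither to `r_d β^ω` nor to
any pumped configuration `r_d β^{e-d+g}γ` with `g ≥ 1`. Such a choice is possible whenever
`x α₀ β^J γ ≁ x α₀ β^ω` and `eats_{α₀} = eats_{α₀β}`, taking `y ∈ eats_{α₀}(x)`. Otherwise,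
whenever a run of `x α₀ β^J γ` uncovers the bottom `β^J γ` in some state `y`, either
`y β^J γ ∼ y β^ω`, or `y β^J γ` may be replaced by the bisimilar `y β^g β^J γ`, whose extra `β^g`
is absorbed by `β^ω`; the linked-pair equation keeps all these states `y` inside `eats_{α₀}(x)`.
So replacing the bottom `β^J γ` by `β^ω` is a bisimulation up to bisimilarity.

If `d < d'` and `r_d = r_{d'}`, then `r_d β^{e-d}γ` is a pumped version of `r_{d'} β^{e-d'}γ`,
so the two are not bisimilar. Hence on an interval of more than `|Q|·k ≤ ι(|P|, k)` indices
the map `d ↦ (r_d, [r_d β^{e-d}γ])` is injective and meets more than `k` bisimulation classes.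
-/

theorem Finset.exists_subset_injOn_of_injOn_prod {ι β κ : Type*} [Fintype β] [DecidableEq κ]
    {D : Finset ι} {f : ι → β} {g : ι → κ} (hfg : Set.InjOn (fun i => (f i, g i)) D) {k : ℕ}
    (hk : Fintype.card β * k < D.card) : ∃ T ⊆ D, k < T.card ∧ Set.InjOn g T := by
  classical
  have hD : D.card ≤ Fintype.card β * (D.image g).card := by
    calc D.card ≤ ((Finset.univ : Finset β) ×ˢ D.image g).card :=
          Finset.card_le_card_of_injOn _
            (fun i hi => Finset.mem_product.mpr ⟨Finset.mem_univ _, Finset.mem_image_of_mem g hi⟩)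
            hfg
      _ = Fintype.card β * (D.image g).card := by rw [Finset.card_product, Finset.card_univ]
  obtain ⟨T, hTD, hinj, hT⟩ := Finset.exists_subset_injOn_image_eq_of_surjOn (D : Set ι)
    (D.image g) (by simpa only [Finset.coe_image] using Set.surjOn_image g (D : Set ι))
  refine ⟨T, Finset.coe_subset.mp hTD, ?_, hinj⟩
  rw [← Finset.card_image_of_injOn hinj, hT]
  exact Nat.lt_of_mul_lt_mul_left (hk.trans_le hD)

theorem exists_seq_of_forall_exists {α : Type*} {p : ℕ → α → Prop} {S : α → α → Prop} {N : ℕ}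
    {x₀ : α} (h₀ : p 0 x₀) (hstep : ∀ n < N, ∀ x, p n x → ∃ y, S x y ∧ p (n + 1) y) :
    ∃ f : ℕ → α, (∀ n ≤ N, p n (f n)) ∧ ∀ n < N, S (f n) (f (n + 1)) := by
  induction N with
  | zero =>
    refine ⟨fun _ => x₀, fun n hn => ?_, fun n hn => absurd hn n.not_lt_zero⟩
    rwa [Nat.le_zero.mp hn]
  | succ N ih =>
    obtain ⟨f, hp, hS⟩ := ih fun n hn => hstep n (Nat.lt_succ_of_lt hn)
    obtain ⟨y, hSy, hpy⟩ := hstep N N.lt_succ_self (f N) (hp N le_rfl)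
    refine ⟨Function.update f (N + 1) y, fun n hn => ?_, fun n hn => ?_⟩
    · rcases hn.lt_or_eq with hn | rfl
      · rw [Function.update_of_ne (by omega)]
        exact hp n (by omega)
      · rwa [Function.update_self]
    · rw [Function.update_of_ne (by omega)]
      rcases (Nat.lt_succ_iff.mp hn).lt_or_eq with hn | rfl
      · rw [Function.update_of_ne (by omega)]
        exact hS n hn
      · rwa [Function.update_self]

namespace SC

variable {Γ : Type}

lemma push_nil (σ : SC Γ) : push [] σ = σ := by
  cases σ with
  | inl l => rfl
  | inr s => exact congrArg Sum.inr (Stream'.nil_append_stream s)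

lemma push_append (l m : List Γ) (σ : SC Γ) : push (l ++ m) σ = push l (push m σ) := by
  cases σ with
  | inl x => exact congrArg Sum.inl (List.append_assoc l m x)
  | inr s => exact congrArg Sum.inr (Stream'.append_append_stream l m s)

lemma push_cons (X : Γ) (l : List Γ) (σ : SC Γ) : push (X :: l) σ = cons X (push l σ) := by
  cases σ with
  | inl x => rfl
  | inr s => exact congrArg Sum.inr (Stream'.cons_append_stream X l s)

lemma cons_inj {X Y : Γ} {σ τ : SC Γ} : cons X σ = cons Y τ ↔ X = Y ∧ σ = τ := by
  refine ⟨fun h => ?_, by rintro ⟨rfl, rfl⟩; rfl⟩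
  cases σ <;> cases τ <;> simp only [cons, reduceCtorEq] at h
  · obtain ⟨rfl, rfl⟩ := List.cons.inj (Sum.inl.inj h)
    exact ⟨rfl, rfl⟩
  · obtain ⟨rfl, rfl⟩ := Stream'.cons_injective2 (Sum.inr.inj h)
    exact ⟨rfl, rfl⟩

end SC

lemma listPow_add {Γ : Type} (β : List Γ) (m n : ℕ) :
    listPow β (m + n) = listPow β m ++ listPow β n := by
  induction m with
  | zero => simp [listPow]
  | succ m ih => rw [Nat.add_right_comm, listPow, listPow, ih, List.append_assoc]

lemma listPow_ne_nil {Γ : Type} {β : List Γ} (hβ : β ≠ []) {g : ℕ} (hg : 1 ≤ g) :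
    listPow β g ≠ [] := by
  obtain ⟨g, rfl⟩ := Nat.exists_eq_add_of_le' hg
  simp [listPow, hβ]

lemma push_cycSC {Γ : Type} (β : List Γ) (hβ : β ≠ []) :
    SC.push β (cycSC β hβ) = cycSC β hβ :=
  congrArg Sum.inr (Stream'.cycle_eq β hβ).symm

lemma push_listPow_cycSC {Γ : Type} (β : List Γ) (hβ : β ≠ []) (g : ℕ) :
    SC.push (listPow β g) (cycSC β hβ) = cycSC β hβ := by
  induction g with
  | zero => exact SC.push_nil _
  | succ g ih => rw [listPow, SC.push_append, ih, push_cycSC]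

namespace PDS

variable {Q Γ A : Type} {P : PDS Q Γ A}

lemma step_cons_iff {p : Q} {X : Γ} {σ : SC Γ} {a : A} {t : Q × SC Γ} :
    P.Step a (p, SC.cons X σ) t ↔ ∃ q γ, (p, X, a, q, γ) ∈ P.Δ ∧ t = (q, SC.push γ σ) := by
  constructor
  · rintro ⟨p', X', q, γ, σ', hδ, hs, rfl⟩
    obtain ⟨rfl, hc⟩ := Prod.mk.inj hs
    obtain ⟨rfl, rfl⟩ := SC.cons_inj.mp hc
    exact ⟨q, γ, hδ, rfl⟩
  · rintro ⟨q, γ, hδ, rfl⟩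
    exact ⟨p, X, q, γ, σ, hδ, rfl, rfl⟩

lemma step_push_cons {p q : Q} {X : Γ} {a : A} {γ : List Γ} (hδ : (p, X, a, q, γ) ∈ P.Δ)
    (σ : List Γ) (μ : SC Γ) :
    P.Step a (p, SC.push (X :: σ) μ) (q, SC.push (γ ++ σ) μ) := by
  rw [SC.push_cons, SC.push_append]
  exact step_cons_iff.mpr ⟨q, γ, hδ, rfl⟩

lemma exists_of_step_push_cons {p : Q} {X : Γ} {σ : List Γ} {μ : SC Γ} {a : A}
    {t : Q × SC Γ} (h : P.Step a (p, SC.push (X :: σ) μ) t) :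
    ∃ q γ, (p, X, a, q, γ) ∈ P.Δ ∧ t = (q, SC.push (γ ++ σ) μ) := by
  rw [SC.push_cons, step_cons_iff] at h
  obtain ⟨q, γ, hδ, rfl⟩ := h
  exact ⟨q, γ, hδ, by rw [SC.push_append]⟩

lemma stepAny_inl {p q : Q} {X : Γ} {a : A} {γ : List Γ} (hδ : (p, X, a, q, γ) ∈ P.Δ)
    (σ : List Γ) : P.StepAny (p, Sum.inl (X :: σ)) (q, Sum.inl (γ ++ σ)) :=
  ⟨a, (step_cons_iff (σ := Sum.inl σ)).mpr ⟨q, γ, hδ, rfl⟩⟩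

lemma reach_append_bottom {p m : Q} {η η' : List Γ} (h : P.Reach (p, Sum.inl η) (m, Sum.inl η'))
    (l : List Γ) : P.Reach (p, Sum.inl (η ++ l)) (m, Sum.inl (η' ++ l)) := by
  let f : Q × SC Γ → Q × SC Γ := fun c => (c.1, Sum.elim (fun σ => Sum.inl (σ ++ l)) Sum.inr c.2)
  refine Relation.ReflTransGen.lift f (fun s t hst => ?_) _ _ h
  obtain ⟨a, p, X, q, γ, σ, hδ, rfl, rfl⟩ := hst
  cases σ with
  | inl ρ =>
    show P.StepAny (p, Sum.inl (X :: ρ ++ l)) (q, Sum.inl (γ ++ ρ ++ l))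
    rw [List.append_assoc]
    exact P.stepAny_inl hδ (ρ ++ l)
  | inr ρ => exact ⟨a, (step_cons_iff (σ := Sum.inr ρ)).mpr ⟨q, γ, hδ, rfl⟩⟩

lemma exists_reach_of_reach_append {p m : Q} {η l : List Γ}
    (h : P.Reach (p, Sum.inl (η ++ l)) (m, Sum.inl [])) :
    ∃ w, P.Reach (p, Sum.inl η) (w, Sum.inl []) ∧ P.Reach (w, Sum.inl l) (m, Sum.inl []) := by
  suffices ∀ s, P.Reach s (m, Sum.inl []) → ∀ p η, s = (p, Sum.inl (η ++ l)) →
      ∃ w, P.Reach (p, Sum.inl η) (w, Sum.inl []) ∧ P.Reach (w, Sum.inl l) (m, Sum.inl []) from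
    this _ h p η rfl
  intro s hs
  induction hs using Relation.ReflTransGen.head_induction_on with
  | refl =>
    rintro p η h
    obtain ⟨rfl, hη⟩ := Prod.mk.inj h
    obtain ⟨rfl, rfl⟩ := List.append_eq_nil_iff.mp (Sum.inl.inj hη).symm
    exact ⟨m, .refl, .refl⟩
  | head hstep hrest ih =>
    rintro p (_ | ⟨X, ρ⟩) rfl
    · exact ⟨p, .refl, .head hstep hrest⟩
    obtain ⟨a, hstep⟩ := hstep
    obtain ⟨q, γ, hδ, rfl⟩ := (step_cons_iff (σ := Sum.inl (ρ ++ l))).mp hstep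
    obtain ⟨w, hρ, hl⟩ := ih q (γ ++ ρ) (by rw [List.append_assoc]; rfl)
    exact ⟨w, .head (P.stepAny_inl hδ ρ) hρ, hl⟩

lemma Bisim.refl (s : Q × SC Γ) : P.Bisim s s :=
  ⟨(· = ·), fun _ _ h _ => h ▸ ⟨fun s' h => ⟨s', h, rfl⟩, fun t' h => ⟨t', h, rfl⟩⟩, rfl⟩

lemma Bisim.symm {s t : Q × SC Γ} (h : P.Bisim s t) : P.Bisim t s := by
  obtain ⟨R, hR, hst⟩ := h
  exact ⟨flip R, fun s t h a => ⟨(hR t s h a).2, (hR t s h a).1⟩, hst⟩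

lemma Bisim.trans {s t u : Q × SC Γ} (h₁ : P.Bisim s t) (h₂ : P.Bisim t u) : P.Bisim s u := by
  obtain ⟨R₁, hR₁, h₁⟩ := h₁
  obtain ⟨R₂, hR₂, h₂⟩ := h₂
  refine ⟨Relation.Comp R₁ R₂, ?_, t, h₁, h₂⟩
  rintro x z ⟨y, hxy, hyz⟩ a
  constructor
  · intro x' hx
    obtain ⟨y', hy, hxy'⟩ := (hR₁ x y hxy a).1 x' hx
    obtain ⟨z', hz, hyz'⟩ := (hR₂ y z hyz a).1 y' hy
    exact ⟨z', hz, y', hxy', hyz'⟩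
  · intro z' hz
    obtain ⟨y', hy, hyz'⟩ := (hR₂ y z hyz a).2 z' hz
    obtain ⟨x', hx, hxy'⟩ := (hR₁ x y hxy a).2 y' hy
    exact ⟨x', hx, y', hxy', hyz'⟩

lemma isBisim_bisim : P.IsBisim P.Bisim := by
  rintro s t ⟨R, hR, hst⟩ a
  exact ⟨fun s' hs => (hR s t hst a).1 s' hs |>.imp fun _ h => ⟨h.1, R, hR, h.2⟩,
    fun t' ht => (hR s t hst a).2 t' ht |>.imp fun _ h => ⟨h.1, R, hR, h.2⟩⟩

def bisimSetoid (P : PDS Q Γ A) : Setoid (Q × SC Γ) :=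
  ⟨P.Bisim, ⟨Bisim.refl, Bisim.symm, Bisim.trans⟩⟩


lemma mem_eats_singleton {κ : List Γ} {w r : Q} :
    r ∈ P.eats κ {w} ↔ P.Reach (w, Sum.inl κ) (r, Sum.inl []) := by
  simp [eats]

lemma eats_append (κ l : List Γ) (T : Set Q) : P.eats (κ ++ l) T = P.eats l (P.eats κ T) := by
  ext r
  constructor
  · rintro ⟨q, hq, hr⟩
    obtain ⟨w, hκ, hl⟩ := exists_reach_of_reach_append hr
    exact ⟨w, ⟨q, hq, hκ⟩, hl⟩
  · rintro ⟨w, ⟨q, hq, hκ⟩, hl⟩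
    exact ⟨q, hq, (reach_append_bottom hκ l).trans hl⟩

lemma eats_append_listPow {α β : List Γ} (h : P.eats α = P.eats (α ++ β)) (g : ℕ) :
    P.eats (α ++ listPow β g) = P.eats α := by
  induction g with
  | zero => simp [listPow]
  | succ g ih =>
    funext T
    rw [listPow, ← List.append_assoc, eats_append, ← h, ← eats_append, ih]

lemma mem_eats_of_mem_eats_listPow {α β : List Γ} (h : P.eats α = P.eats (α ++ β)) {x w r : Q}
    {g : ℕ} (hw : w ∈ P.eats α {x}) (hr : r ∈ P.eats (listPow β g) {w}) : r ∈ P.eats α {x} := by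
  rw [← eats_append_listPow h g, eats_append]
  obtain ⟨_, rfl, hr⟩ := hr
  exact ⟨_, hw, hr⟩


/-- `t` is `s` up to bisimilarity, with the bottom `μ` of a stack reached from a seed `(w, κ)`
replaced by `ν`. -/
def BottomSwap (P : PDS Q Γ A) (Seed : Q → List Γ → Prop) (μ ν : SC Γ) (s t : Q × SC Γ) :
    Prop :=
  ∃ w κ, Seed w κ ∧ ∃ w' σ, P.Reach (w, Sum.inl κ) (w', Sum.inl σ) ∧
    P.Bisim s (w', SC.push σ μ) ∧ t = (w', SC.push σ ν)

section BottomSwap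

variable {Seed : Q → List Γ → Prop} {μ ν : SC Γ}

lemma BottomSwap.progress {w w' : Q} {κ σ : List Γ} {X : Γ} {s : Q × SC Γ} (hseed : Seed w κ)
    (hreach : P.Reach (w, Sum.inl κ) (w', Sum.inl (X :: σ)))
    (hs : P.Bisim s (w', SC.push (X :: σ) μ)) (a : A) :
    (∀ s', P.Step a s s' →
      ∃ t', P.Step a (w', SC.push (X :: σ) ν) t' ∧ P.BottomSwap Seed μ ν s' t') ∧
    (∀ t', P.Step a (w', SC.push (X :: σ) ν) t' →
      ∃ s', P.Step a s s' ∧ P.BottomSwap Seed μ ν s' t') := by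
  constructor
  · intro s' hs'
    obtain ⟨u, hu, hs'u⟩ := (isBisim_bisim _ _ hs a).1 s' hs'
    obtain ⟨q, γ, hδ, rfl⟩ := exists_of_step_push_cons hu
    exact ⟨_, step_push_cons hδ σ ν,
      w, κ, hseed, q, γ ++ σ, hreach.tail (stepAny_inl hδ σ), hs'u, rfl⟩
  · intro t' ht'
    obtain ⟨q, γ, hδ, rfl⟩ := exists_of_step_push_cons ht'
    obtain ⟨s', hs', hs'u⟩ := (isBisim_bisim _ _ hs a).2 _ (step_push_cons hδ σ μ)
    exact ⟨s', hs', w, κ, hseed, q, γ ++ σ, hreach.tail (stepAny_inl hδ σ), hs'u, rfl⟩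

lemma BottomSwap.bisim_or_cons
    (H : ∀ w κ, Seed w κ → ∀ w' ∈ P.eats κ {w}, P.Bisim (w', μ) (w', ν) ∨
      ∃ κ', Seed w' κ' ∧ κ' ≠ [] ∧ SC.push κ' ν = ν ∧ P.Bisim (w', μ) (w', SC.push κ' μ))
    {s t : Q × SC Γ} (h : P.BottomSwap Seed μ ν s t) :
    P.Bisim s t ∨ ∃ w κ, Seed w κ ∧ ∃ w' X σ, P.Reach (w, Sum.inl κ) (w', Sum.inl (X :: σ)) ∧
      P.Bisim s (w', SC.push (X :: σ) μ) ∧ t = (w', SC.push (X :: σ) ν) := by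
  obtain ⟨w, κ, hseed, w', σ, hreach, hs, rfl⟩ := h
  obtain _ | ⟨X, σ⟩ := σ
  · rw [SC.push_nil] at hs ⊢
    rcases H w κ hseed w' (mem_eats_singleton.mpr hreach) with hμν | ⟨κ', hseed', hne, hν, hμ⟩
    · exact Or.inl (hs.trans hμν)
    · obtain ⟨X, σ, rfl⟩ := List.exists_cons_of_ne_nil hne
      exact Or.inr ⟨w', X :: σ, hseed', w', X, σ, .refl, hs.trans hμ, by rw [hν]⟩
  · exact Or.inr ⟨w, κ, hseed, w', X, σ, hreach, hs, rfl⟩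

theorem bisim_push_of_seed
    (H : ∀ w κ, Seed w κ → ∀ w' ∈ P.eats κ {w}, P.Bisim (w', μ) (w', ν) ∨
      ∃ κ', Seed w' κ' ∧ κ' ≠ [] ∧ SC.push κ' ν = ν ∧ P.Bisim (w', μ) (w', SC.push κ' μ))
    {w : Q} {κ : List Γ} (hseed : Seed w κ) : P.Bisim (w, SC.push κ μ) (w, SC.push κ ν) := by
  refine ⟨fun s t => P.BottomSwap Seed μ ν s t ∨ P.Bisim s t, ?_,
    Or.inl ⟨w, κ, hseed, w, κ, .refl, Bisim.refl _, rfl⟩⟩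
  have of_bisim : ∀ s t, P.Bisim s t → ∀ a,
      (∀ s', P.Step a s s' → ∃ t', P.Step a t t' ∧ (P.BottomSwap Seed μ ν s' t' ∨ P.Bisim s' t')) ∧
      (∀ t', P.Step a t t' → ∃ s', P.Step a s s' ∧ (P.BottomSwap Seed μ ν s' t' ∨ P.Bisim s' t')) :=
    fun s t h a =>
      ⟨fun s' hs' => ((isBisim_bisim s t h a).1 s' hs').imp fun _ => And.imp_right Or.inr,
        fun t' ht' => ((isBisim_bisim s t h a).2 t' ht').imp fun _ => And.imp_right Or.inr⟩
  rintro s t (h | h) a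
  · rcases h.bisim_or_cons H with h | ⟨w, κ, hseed, w', X, σ, hreach, hs, rfl⟩
    · exact of_bisim s t h a
    obtain ⟨hfwd, hbwd⟩ := BottomSwap.progress hseed hreach hs a
    exact ⟨fun s' hs' => (hfwd s' hs').imp fun _ => And.imp_right Or.inl,
      fun t' ht' => (hbwd t' ht').imp fun _ => And.imp_right Or.inl⟩
  · exact of_bisim s t h a

end BottomSwap

def Unpumpable (P : PDS Q Γ A) (β μ : List Γ) (y : Q) : Prop :=
  ∀ g, 1 ≤ g → ¬ P.Bisim (y, Sum.inl μ) (y, Sum.inl (listPow β g ++ μ))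

theorem exists_mem_eats_unpumpable_of_not_bisim_push {x : Q} {α₀ β μ : List Γ} (hβ : β ≠ [])
    (hlink : P.eats α₀ = P.eats (α₀ ++ β))
    (h : ¬ P.Bisim (x, Sum.inl (α₀ ++ μ)) (x, SC.push α₀ (cycSC β hβ))) :
    ∃ y ∈ P.eats α₀ {x},
      ¬ P.Bisim (y, Sum.inl μ) (y, cycSC β hβ) ∧ P.Unpumpable β μ y := by
  by_contra! hcon
  let Seed : Q → List Γ → Prop := fun w κ =>
    (w = x ∧ κ = α₀) ∨ (w ∈ P.eats α₀ {x} ∧ ∃ g, 1 ≤ g ∧ κ = listPow β g)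
  refine h (bisim_push_of_seed (Seed := Seed) (μ := Sum.inl μ) ?_ (Or.inl ⟨rfl, rfl⟩))
  rintro w κ hseed y hy
  replace hy : y ∈ P.eats α₀ {x} := by
    rcases hseed with ⟨rfl, rfl⟩ | ⟨hw, g, -, rfl⟩
    exacts [hy, mem_eats_of_mem_eats_listPow hlink hw hy]
  by_cases hb : P.Bisim (y, Sum.inl μ) (y, cycSC β hβ)
  · exact Or.inl hb
  obtain ⟨g, hg, hbg⟩ : ∃ g, 1 ≤ g ∧ P.Bisim (y, Sum.inl μ) (y, Sum.inl (listPow β g ++ μ)) := by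
    simpa [Unpumpable] using hcon y hy hb
  exact Or.inr ⟨listPow β g, Or.inr ⟨hy, g, hg, rfl⟩, listPow_ne_nil hβ hg,
    push_listPow_cycSC β hβ g, hbg⟩

lemma exists_mem_eats_unpumpable_of_not_bisim_listPow_succ {β γ : List Γ} (hβ : β ≠ [])
    (hββ : P.eats β = P.eats (β ++ β)) {x : Q} {J : ℕ}
    (h : ¬ P.Bisim (x, Sum.inl (listPow β (J + 1) ++ γ)) (x, cycSC β hβ)) :
    ∃ y ∈ P.eats β {x}, ¬ P.Bisim (y, Sum.inl (listPow β J ++ γ)) (y, cycSC β hβ) ∧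
      P.Unpumpable β (listPow β J ++ γ) y := by
  refine exists_mem_eats_unpumpable_of_not_bisim_push hβ hββ ?_
  rwa [push_cycSC, ← List.append_assoc]

theorem exists_unpumpable_digging_seq {q : Q} {α β γ : List Γ} (hβ : β ≠ [])
    (hlp : P.LinkedPair α β) {e : ℕ}
    (h : ¬ P.Bisim (q, Sum.inl (α ++ (listPow β (e - 1) ++ γ))) (q, SC.push α (cycSC β hβ))) :
    ∃ r : ℕ → Q, DiggingSeq P q α β e r ∧ ∀ d, 1 ≤ d → d ≤ e →
      ¬ P.Bisim (r d, Sum.inl (listPow β (e - d) ++ γ)) (r d, cycSC β hβ) ∧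
        P.Unpumpable β (listPow β (e - d) ++ γ) (r d) := by
  obtain ⟨-, hαβ, hββ⟩ := hlp
  let Good : ℕ → Q → Prop := fun d y =>
    ¬ P.Bisim (y, Sum.inl (listPow β (e - d) ++ γ)) (y, cycSC β hβ) ∧
      P.Unpumpable β (listPow β (e - d) ++ γ) y
  obtain ⟨r₁, hr₁, hgood₁⟩ := exists_mem_eats_unpumpable_of_not_bisim_push hβ hαβ h
  rw [hαβ, eats_append] at hr₁
  obtain ⟨r₀, hr₀, hr₀₁⟩ := hr₁
  obtain ⟨r, hr, hrβ⟩ := exists_seq_of_forall_exists (S := fun x y => y ∈ P.eats β {x})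
    (p := fun d y => (d = 0 → y = r₀) ∧ (1 ≤ d → Good d y)) (N := e)
    ⟨fun _ => rfl, fun h => absurd h (by omega)⟩ <| by
      rintro (_ | n) hn x ⟨hx₀, hx⟩
      · exact ⟨r₁, hx₀ rfl ▸ mem_eats_singleton.mpr hr₀₁, by omega, fun _ => hgood₁⟩
      · have hJ : e - (n + 1) = e - (n + 1 + 1) + 1 := by omega
        obtain ⟨y, hy, hgood⟩ :=
          exists_mem_eats_unpumpable_of_not_bisim_listPow_succ hβ hββ (hJ ▸ (hx n.succ_pos).1)
        exact ⟨y, hy, by omega, fun _ => hgood⟩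
  refine ⟨r, ⟨(hr 0 (Nat.zero_le _)).1 rfl ▸ hr₀, fun d hd hde => ?_⟩,
    fun d hd hde => (hr d hde).2 hd⟩
  obtain ⟨n, rfl⟩ := Nat.exists_eq_add_of_le' hd
  exact hrβ n (by omega)

lemma not_bisim_of_lt {r : ℕ → Q} {β γ : List Γ} {e : ℕ}
    (hunp : ∀ d, 1 ≤ d → d ≤ e → P.Unpumpable β (listPow β (e - d) ++ γ) (r d))
    {d d' : ℕ} (hlt : d < d') (hd' : d' ≤ e) (hr : r d = r d') :
    ¬ P.Bisim (r d, Sum.inl (listPow β (e - d) ++ γ))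
      (r d', Sum.inl (listPow β (e - d') ++ γ)) := by
  have hpow : listPow β (e - d) ++ γ = listPow β (d' - d) ++ (listPow β (e - d') ++ γ) := by
    rw [← List.append_assoc, ← listPow_add, show d' - d + (e - d') = e - d by omega]
  rw [hr, hpow]
  exact fun h => hunp d' (by omega) hd' (d' - d) (by omega) h.symm

theorem exists_pairwise_not_bisim [Fintype Q] {r : ℕ → Q} {β γ : List Γ} {e a b k : ℕ}
    (hunp : ∀ d, 1 ≤ d → d ≤ e → P.Unpumpable β (listPow β (e - d) ++ γ) (r d)) (hbe : b ≤ e)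
    (hk : Fintype.card Q * k < b + 1 - a) :
    ∃ T : Finset (Q × SC Γ), k < T.card ∧
      (∀ s ∈ T, ∃ d, a ≤ d ∧ d ≤ b ∧ s = (r d, Sum.inl (listPow β (e - d) ++ γ))) ∧
      (∀ s ∈ T, ∀ t ∈ T, s ≠ t → ¬ P.Bisim s t) := by
  classical
  let cfg : ℕ → Q × SC Γ := fun d => (r d, Sum.inl (listPow β (e - d) ++ γ))
  have hinj : Set.InjOn (fun d => (r d, Quotient.mk P.bisimSetoid (cfg d))) (Finset.Icc a b) := by
    intro d hd d' hd' h
    obtain ⟨hr, hc⟩ := Prod.mk.inj h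
    have hbis : P.Bisim (cfg d) (cfg d') := Quotient.exact hc
    simp only [Finset.coe_Icc, Set.mem_Icc] at hd hd'
    by_contra hne
    rcases Ne.lt_or_gt hne with hlt | hlt
    · exact not_bisim_of_lt hunp hlt (by omega) hr hbis
    · exact not_bisim_of_lt hunp hlt (by omega) hr.symm hbis.symm
  obtain ⟨T, hTD, hkT, hTinj⟩ :=
    Finset.exists_subset_injOn_of_injOn_prod hinj (by rwa [Nat.card_Icc])
  have hT : ∀ d ∈ T, ∀ d' ∈ T, P.Bisim (cfg d) (cfg d') → d = d' :=
    fun d hd d' hd' h => hTinj hd hd' (Quotient.sound h)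
  have hcfg : Set.InjOn cfg T := fun d hd d' hd' h =>
    hT d hd d' hd' (by rw [show cfg d = cfg d' from h]; exact Bisim.refl _)
  refine ⟨T.image cfg, ?_, ?_, ?_⟩
  · rwa [Finset.card_image_of_injOn hcfg]
  · simp only [Finset.mem_image]
    rintro _ ⟨d, hd, rfl⟩
    obtain ⟨had, hdb⟩ := Finset.mem_Icc.mp (hTD hd)
    exact ⟨d, had, hdb, rfl⟩
  · simp only [Finset.mem_image]
    rintro _ ⟨d, hd, rfl⟩ _ ⟨d', hd', rfl⟩ hne h
    exact hne (congrArg cfg (hT d hd d' hd' h))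

lemma card_le_size [Fintype Q] [Fintype Γ] [Fintype A] (P : PDS Q Γ A) :
    Fintype.card Q ≤ P.size := by
  unfold size
  omega

end PDS

theorem stmt_14_general (Q Γ A : Type) [Fintype Q] [Fintype Γ] [Fintype A]
    (P : PDS Q Γ A) (q : Q) (α β γ : List Γ) (hβ : β ≠ [])
    (hlp : P.LinkedPair α β) (e : ℕ) (he : 1 ≤ e)
    (hnotbis : ∀ d, 1 ≤ d → d ≤ e →
      ¬ P.Bisim (q, Sum.inl (α ++ listPow β (e - d) ++ γ)) (q, SC.push α (cycSC β hβ))) :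
    ∃ r : ℕ → Q, Avoiding P q α β γ hβ e e r ∧
      ∀ (k a b : ℕ), a ≤ b → b ≤ e →
        b - a + 1 > P.size * k * ((P.size + k) ^ P.size + 1) →
        ∃ T : Finset (Q × SC Γ), T.card > k ∧
          (∀ s ∈ T, ∃ d, a ≤ d ∧ d ≤ b ∧ s = (r d, Sum.inl (listPow β (e - d) ++ γ))) ∧
          (∀ s ∈ T, ∀ t ∈ T, s ≠ t → ¬ P.Bisim s t) := by
  obtain ⟨r, hdig, hgood⟩ := P.exists_unpumpable_digging_seq hβ hlp
    (by simpa only [List.append_assoc] using hnotbis 1 le_rfl he)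
  refine ⟨r, ⟨hdig, ⟨r 1, hdig.2 1 le_rfl he, (hgood 1 le_rfl he).1⟩,
    fun d hd hde => (hgood d hd hde).1⟩, fun k a b hab hbe hlen => ?_⟩
  refine PDS.exists_pairwise_not_bisim (fun d hd hde => (hgood d hd hde).2) hbe ?_
  calc Fintype.card Q * k ≤ P.size * k := Nat.mul_le_mul_right k P.card_le_size
    _ ≤ P.size * k * ((P.size + k) ^ P.size + 1) := Nat.le_mul_of_pos_right _ (Nat.succ_pos _)
    _ < b + 1 - a := by omega

/-- With `ι n k = n·k·((n+k)^n + 1)`: for every PDS in push-pop normal form, every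
linked pair `(α, β)` and every configuration `qαβ^eγ` (`e ≥ 1`) with
`qαβ^{e−d}γ ≁ qαβ^ω` for all `d ∈ [1, e]`, there is a `β^ω`-avoiding digging sequence
`(r₀, …, r_e)` for `(q, α, β)` such that for every `k` and every interval
`[a, b] ⊆ [0, e]` with `b − a + 1 > ι |P| k` there are more than `k` pairwise
non-bisimilar configurations in `{ r_d β^{e−d} γ | d ∈ [a, b] }`. -/
theorem stmt_14 (Q Γ A : Type) [Fintype Q] [Fintype Γ] [Fintype A]
    (P : PDS Q Γ A) (hpp : P.PushPop) (q : Q) (α β γ : List Γ) (hβ : β ≠ [])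
    (hlp : P.LinkedPair α β) (e : ℕ) (he : 1 ≤ e)
    (hnotbis : ∀ d, 1 ≤ d → d ≤ e →
      ¬ P.Bisim (q, Sum.inl (α ++ listPow β (e - d) ++ γ)) (q, SC.push α (cycSC β hβ))) :
    ∃ r : ℕ → Q, Avoiding P q α β γ hβ e e r ∧
      ∀ (k a b : ℕ), a ≤ b → b ≤ e →
        b - a + 1 > P.size * k * ((P.size + k) ^ P.size + 1) →
        ∃ T : Finset (Q × SC Γ), T.card > k ∧
          (∀ s ∈ T, ∃ d, a ≤ d ∧ d ≤ b ∧ s = (r d, Sum.inl (listPow β (e - d) ++ γ))) ∧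
          (∀ s ∈ T, ∀ t ∈ T, s ≠ t → ¬ P.Bisim s t) :=
  stmt_14_general Q Γ A P q α β γ hβ hlp e he hnotbis
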